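/- (Chord–arc comparability for a fixed boundary curve.) Let T > 0 and let γ : [0, T] → ℝ² be injective, continuously differentiable, and parametrized by arc length (‖γ'(t)‖ = 1 for all t ∈ [0, T]). Then there exists a constant c > 0 such that ‖γ(β) − γ(α)‖ ≥ c·(β − α) for all 0 ≤ α < β ≤ T; i.e., for every sub-arc, the Euclidean distance between its endpoints is comparable to its arc length. -/
import Mathlib


/-- The Euclidean norm on `ℝ²`. -/
noncomputable def euclNorm (v : Fin 2 → ℝ) : ℝ := Real.sqrt (v 0 ^ 2 + v 1 ^ 2)


lemma euclNorm_eq (v : EuclideanSpace ℝ (Fin 2)) : euclNorm v = ‖v‖ := by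
  rw [EuclideanSpace.norm_eq, Fin.sum_univ_two]
  simp [euclNorm, Real.norm_eq_abs, sq_abs]


/-- Chord–arc comparability for a fixed boundary curve.  Let `T > 0` and let
`γ : [0,T] → ℝ²` be injective, continuously differentiable and parametrized by arc length
(`‖γ'(t)‖ = 1`).  Then there is a constant `c > 0` such that
`‖γ(β) − γ(α)‖ ≥ c·(β − α)` for all `0 ≤ α < β ≤ T`. -/
theorem chord_arc (T : ℝ) (hT : 0 < T) (γ γ' : ℝ → Fin 2 → ℝ)
    (hinj : Set.InjOn γ (Set.Icc 0 T))
    (hderiv : ∀ t ∈ Set.Icc 0 T, HasDerivWithinAt γ (γ' t) (Set.Icc 0 T) t)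
    (hcont : ContinuousOn γ' (Set.Icc 0 T))
    (hunit : ∀ t ∈ Set.Icc 0 T, euclNorm (γ' t) = 1) :
    ∃ c > (0:ℝ), ∀ α β : ℝ, 0 ≤ α → α < β → β ≤ T →
      c * (β - α) ≤ euclNorm (γ β - γ α) := by
  set e := EuclideanSpace.equiv (Fin 2) ℝ with he
  set Γ : ℝ → EuclideanSpace ℝ (Fin 2) := fun t => e.symm (γ t) with hΓ
  set Γ' : ℝ → EuclideanSpace ℝ (Fin 2) := fun t => e.symm (γ' t) with hΓ'
  have hderivΓ : ∀ t ∈ Set.Icc 0 T, HasDerivWithinAt Γ (Γ' t) (Set.Icc 0 T) t := by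
    intro t ht
    exact (e.symm.hasFDerivAt.comp_hasDerivWithinAt t (hderiv t ht))
  have hcontΓ' : ContinuousOn Γ' (Set.Icc 0 T) :=
    e.symm.continuous.comp_continuousOn hcont
  have hcontΓ : ContinuousOn Γ (Set.Icc 0 T) :=
    fun t ht => (hderivΓ t ht).continuousWithinAt
  have hinjΓ : Set.InjOn Γ (Set.Icc (0:ℝ) T) := by
    intro a ha b hb hab
    exact hinj ha hb (e.symm.injective hab)
  have hunitΓ : ∀ t ∈ Set.Icc 0 T, ‖Γ' t‖ = 1 := by
    intro t ht
    rw [← euclNorm_eq]; exact hunit t ht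
  -- uniform continuity of Γ'
  obtain ⟨δ, hδ0, hδ⟩ : ∃ δ > 0, ∀ s ∈ Set.Icc (0:ℝ) T, ∀ t ∈ Set.Icc (0:ℝ) T,
      |s - t| ≤ δ → ‖Γ' s - Γ' t‖ ≤ 1/2 := by
    have huc : UniformContinuousOn Γ' (Set.Icc 0 T) :=
      (isCompact_Icc).uniformContinuousOn_of_continuous hcontΓ'
    rw [Metric.uniformContinuousOn_iff] at huc
    obtain ⟨δ, hδ0, h⟩ := huc (1/2) (by norm_num)
    refine ⟨δ/2, by positivity, fun s hs t ht hst => ?_⟩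
    have := h s hs t ht (by rw [Real.dist_eq]; linarith)
    rw [dist_eq_norm] at this
    linarith
  -- short chords
  have short : ∀ α β : ℝ, 0 ≤ α → α < β → β ≤ T → β - α ≤ δ →
      (1/2) * (β - α) ≤ ‖Γ β - Γ α‖ := by
    intro α β hα hαβ hβ hgap
    have hsub : Set.Icc α β ⊆ Set.Icc 0 T := Set.Icc_subset_Icc hα hβ
    have hαmem : α ∈ Set.Icc (0:ℝ) T := ⟨hα, by linarith⟩
    set v := Γ' α with hv
    have key : ∀ t ∈ Set.Icc α β, HasDerivWithinAt (fun t => Γ t - t • v)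
        (Γ' t - v) (Set.Icc α β) t := by
      intro t ht
      exact ((hderivΓ t (hsub ht)).mono hsub).sub
        (((hasDerivWithinAt_id t _).smul_const v).congr_deriv (one_smul ℝ v))
    have bound : ∀ t ∈ Set.Icc α β, ‖Γ' t - v‖ ≤ 1/2 := by
      intro t ht
      exact hδ t (hsub ht) α hαmem (by rw [abs_sub_le_iff]; constructor <;>
        [linarith [ht.2, ht.1]; linarith [ht.1]])
    have mvt := (convex_Icc α β).norm_image_sub_le_of_norm_hasDerivWithin_le key bound
      (Set.left_mem_Icc.2 hαβ.le) (Set.right_mem_Icc.2 hαβ.le)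
    -- mvt : ‖(Γ β - β•v) - (Γ α - α•v)‖ ≤ 1/2 * ‖β - α‖
    have h1 : ‖Γ β - Γ α - (β - α) • v‖ ≤ 1/2 * (β - α) := by
      have : Γ β - β • v - (Γ α - α • v) = Γ β - Γ α - (β - α) • v := by
        rw [sub_smul]; abel
      rw [this] at mvt
      rwa [Real.norm_eq_abs, abs_of_nonneg (by linarith)] at mvt
    have h2 : ‖(β - α) • v‖ = β - α := by
      rw [norm_smul, Real.norm_eq_abs, abs_of_nonneg (by linarith), hunitΓ α hαmem, mul_one]
    have h3 := norm_sub_norm_le ((β - α) • v) (Γ β - Γ α)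
    have h4 : (β - α) • v - (Γ β - Γ α) = -(Γ β - Γ α - (β - α) • v) := by abel
    rw [h4, norm_neg] at h3
    linarith [h1, h2 ▸ h3]
  -- long chords: compactness
  set δ' := min δ T with hδ'
  have hδ'0 : 0 < δ' := lt_min hδ0 hT
  have hδ'T : δ' ≤ T := min_le_right _ _
  set K : Set (ℝ × ℝ) := {p | p.1 ∈ Set.Icc (0:ℝ) T ∧ p.2 ∈ Set.Icc (0:ℝ) T ∧ p.1 + δ' ≤ p.2}
    with hK
  have hKcompact : IsCompact K := by
    have hKsub : K ⊆ Set.Icc 0 T ×ˢ Set.Icc 0 T := fun p hp => ⟨hp.1, hp.2.1⟩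
    have hKclosed : IsClosed K := by
      apply IsClosed.inter (isClosed_Icc.preimage continuous_fst)
      exact IsClosed.inter (isClosed_Icc.preimage continuous_snd)
        (isClosed_le (by continuity) continuous_snd)
    exact (isCompact_Icc.prod isCompact_Icc).of_isClosed_subset hKclosed hKsub
  have hKne : K.Nonempty := ⟨(0, δ'), ⟨le_refl 0, hT.le⟩, ⟨hδ'0.le, hδ'T⟩, by simp⟩
  have hFcont : ContinuousOn (fun p : ℝ × ℝ => ‖Γ p.2 - Γ p.1‖) K := by
    apply ContinuousOn.norm
    exact (hcontΓ.comp continuous_snd.continuousOn (fun p hp => hp.2.1)).sub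
      (hcontΓ.comp continuous_fst.continuousOn (fun p hp => hp.1))
  obtain ⟨p₀, hp₀K, hp₀min⟩ := hKcompact.exists_isMinOn hKne hFcont
  set m := ‖Γ p₀.2 - Γ p₀.1‖ with hm
  have hm0 : 0 < m := by
    rw [hm, norm_pos_iff, sub_ne_zero]
    intro hEq
    have : p₀.2 = p₀.1 := hinjΓ hp₀K.2.1 hp₀K.1 hEq
    linarith [hp₀K.2.2, hδ'0]
  refine ⟨min (1/2) (m/T), lt_min (by norm_num) (by positivity), ?_⟩
  intro α β hα hαβ hβ
  have hβα : 0 < β - α := by linarith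
  by_cases hcase : β - α ≤ δ'
  · calc min (1/2) (m/T) * (β - α) ≤ (1/2) * (β - α) := by
          apply mul_le_mul_of_nonneg_right (min_le_left _ _) hβα.le
    _ ≤ ‖Γ β - Γ α‖ := short α β hα hαβ hβ (hcase.trans (min_le_left _ _))
    _ = euclNorm (γ β - γ α) := by rw [euclNorm_eq]; rfl
  · push_neg at hcase
    have hmemK : (α, β) ∈ K := ⟨⟨hα, by linarith⟩, ⟨by linarith, hβ⟩, by
      simp only; linarith⟩
    have hmin := hp₀min hmemK
    calc min (1/2) (m/T) * (β - α) ≤ (m/T) * (β - α) := by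
          apply mul_le_mul_of_nonneg_right (min_le_right _ _) hβα.le
    _ ≤ (m/T) * T := mul_le_mul_of_nonneg_left (by linarith) (by positivity)
    _ = m := by field_simp
    _ ≤ ‖Γ β - Γ α‖ := hmin
    _ = euclNorm (γ β - γ α) := by rw [euclNorm_eq]; rfl
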